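/- Let T be the operator defined by (Tf)(x) = x·f(α(x)), where α(x) = {1/x} is the Gauss map, and let g = (√5 − 1)/2. Then for every p > 1, every n ∈ ℕ, and every f ∈ L^p((0,1), m), we have ∫_0^1 |T^n f(x)|^p dm(x) ≤ g^{(n−1)p} ∫_0^1 |f(x)|^p dm(x), where m is the Gauss measure. -/

import Mathlib

open MeasureTheory

/-- The Gauss map `α(x) = {1/x}`. -/
noncomputable def gaussMap (x : ℝ) : ℝ := Int.fract x⁻¹

/-- The operator `(Tf)(x) = x · f(α(x))`. -/
noncomputable def Tmap (f : ℝ → ℝ) : ℝ → ℝ := fun x => x * f (gaussMap x)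

/-- The Gauss measure on `(0,1)`, with density `1/((1+x) log 2)`. -/
noncomputable def gaussμ : Measure ℝ :=
  ((volume.restrict (Set.Ioo (0:ℝ) 1)).withDensity
    (fun x => ENNReal.ofReal ((Real.log 2)⁻¹ * (1 + x)⁻¹)))

open Set Filter Topology
open scoped ENNReal goldenRatio

/-! `Tⁿ f (x) = x α(x) ⋯ αⁿ⁻¹(x) · f (αⁿ x)`. Of two consecutive points of an orbit in `[0,1)`,
either the first is at most `g = φ⁻¹`, or their product is at most `1 - x < 1 - g = g²`; hence the
multiplier is at most `g^(n-1)`. The Gauss measure is `α`-invariant: on the branch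
`(1/(k+2), 1/(k+1)]` the inverse branch `y ↦ 1/(y+k+1)` pulls the density back to
`(1/(y+k+1) - 1/(y+k+2)) / log 2`, and these terms telescope to the density at `y`.
So `∫ |f ∘ αⁿ|^p dm = ∫ |f|^p dm`. -/

lemma hasSum_sub_succ_of_antitone {b : ℕ → ℝ} (hb : Antitone b)
    (h : Tendsto b atTop (𝓝 0)) : HasSum (fun k => b k - b (k + 1)) (b 0) := by
  refine (hasSum_iff_tendsto_nat_of_nonneg (fun k => sub_nonneg.2 (hb k.le_succ)) _).2 ?_
  simp_rw [Finset.sum_range_sub']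
  simpa using (tendsto_const_nhds (x := b 0)).sub h

lemma MeasureTheory.MeasurePreserving.integral_comp_of_aestronglyMeasurable
    {α β E : Type*} [MeasurableSpace α] [MeasurableSpace β] [NormedAddCommGroup E]
    [NormedSpace ℝ E] {μ : Measure α} {ν : Measure β} {f : α → β} (hf : MeasurePreserving f μ ν)
    {g : β → E} (hg : AEStronglyMeasurable g ν) : ∫ x, g (f x) ∂μ = ∫ y, g y ∂ν := by
  rw [← integral_map hf.aemeasurable (hf.map_eq ▸ hg), hf.map_eq]

lemma inv_goldenRatio_eq : φ⁻¹ = (Real.sqrt 5 - 1) / 2 := by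
  rw [Real.inv_goldenRatio, Real.goldenConj]; ring

lemma inv_goldenRatio_pos : 0 < φ⁻¹ := inv_pos.2 Real.goldenRatio_pos

lemma inv_goldenRatio_lt_one : φ⁻¹ < 1 := inv_lt_one_of_one_lt₀ Real.one_lt_goldenRatio

lemma inv_goldenRatio_sq : φ⁻¹ ^ 2 = 1 - φ⁻¹ := by
  rw [Real.inv_goldenRatio, neg_sq, Real.goldenConj_sq]; ring

lemma gaussMap_mem_Ico (x : ℝ) : gaussMap x ∈ Ico (0 : ℝ) 1 :=
  ⟨Int.fract_nonneg _, Int.fract_lt_one _⟩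

lemma iterate_gaussMap_mem_Ico {x : ℝ} (hx : x ∈ Ico (0 : ℝ) 1) :
    ∀ k, gaussMap^[k] x ∈ Ico (0 : ℝ) 1
  | 0 => hx
  | k + 1 => by rw [Function.iterate_succ_apply']; exact gaussMap_mem_Ico _

lemma mul_gaussMap_le_one_sub {x : ℝ} (hx : x ∈ Ico (0 : ℝ) 1) : x * gaussMap x ≤ 1 - x := by
  rcases hx.1.eq_or_lt with rfl | hx0
  · simp [gaussMap]
  have hinv : 1 ≤ x⁻¹ := one_le_inv₀ hx0 |>.2 hx.2.le
  have hfloor : (1 : ℝ) ≤ ⌊x⁻¹⌋ := by exact_mod_cast Int.le_floor.2 (by exact_mod_cast hinv)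
  calc x * gaussMap x = 1 - x * ⌊x⁻¹⌋ := by
        rw [gaussMap, Int.fract, mul_sub, mul_inv_cancel₀ hx0.ne']
    _ ≤ 1 - x := by nlinarith

noncomputable def orbitProd (n : ℕ) (x : ℝ) : ℝ := ∏ k ∈ Finset.range n, gaussMap^[k] x

lemma orbitProd_succ (n : ℕ) (x : ℝ) : orbitProd (n + 1) x = x * orbitProd n (gaussMap x) := by
  simp only [orbitProd, Finset.prod_range_succ', Function.iterate_succ_apply,
    Function.iterate_zero_apply, mul_comm]

lemma orbitProd_nonneg (n : ℕ) {x : ℝ} (hx : x ∈ Ico (0 : ℝ) 1) : 0 ≤ orbitProd n x :=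
  Finset.prod_nonneg fun k _ => (iterate_gaussMap_mem_Ico hx k).1

lemma Tmap_iterate_apply (n : ℕ) (f : ℝ → ℝ) (x : ℝ) :
    Tmap^[n] f x = orbitProd n x * f (gaussMap^[n] x) := by
  induction n generalizing f with
  | zero => simp [orbitProd]
  | succ n ih =>
    rw [Function.iterate_succ_apply, ih, Tmap, orbitProd, orbitProd, Finset.prod_range_succ,
      Function.iterate_succ_apply']
    ring

lemma inv_goldenRatio_mul_orbitProd_le (n : ℕ) {x : ℝ} (hx : x ∈ Ico (0 : ℝ) 1) :
    φ⁻¹ * orbitProd n x ≤ φ⁻¹ ^ n := by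
  induction n using Nat.strong_induction_on generalizing x with
  | _ n ih =>
  have hg := inv_goldenRatio_pos
  have hα := gaussMap_mem_Ico x
  obtain _ | _ | n := n
  · simpa [orbitProd] using inv_goldenRatio_lt_one.le
  · simpa [orbitProd] using mul_le_of_le_one_right hg.le hx.2.le
  rcases le_or_gt x φ⁻¹ with hsmall | hlarge
  · calc φ⁻¹ * orbitProd (n + 2) x = x * (φ⁻¹ * orbitProd (n + 1) (gaussMap x)) := by
          rw [orbitProd_succ]; ring
      _ ≤ φ⁻¹ * φ⁻¹ ^ (n + 1) :=
          mul_le_mul hsmall (ih (n + 1) (by omega) hα)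
            (mul_nonneg hg.le (orbitProd_nonneg _ hα)) hg.le
      _ = φ⁻¹ ^ (n + 2) := by ring
  · have hα2 := gaussMap_mem_Ico (gaussMap x)
    calc φ⁻¹ * orbitProd (n + 2) x
        = (x * gaussMap x) * (φ⁻¹ * orbitProd n (gaussMap (gaussMap x))) := by
          rw [orbitProd_succ, orbitProd_succ]; ring
      _ ≤ φ⁻¹ ^ 2 * φ⁻¹ ^ n := by
          refine mul_le_mul ?_ (ih n (by omega) hα2)
            (mul_nonneg hg.le (orbitProd_nonneg n hα2)) (by positivity)
          linarith [mul_gaussMap_le_one_sub hx, inv_goldenRatio_sq]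
      _ = φ⁻¹ ^ (n + 2) := by ring

lemma orbitProd_le (n : ℕ) {x : ℝ} (hx : x ∈ Ico (0 : ℝ) 1) :
    orbitProd n x ≤ φ⁻¹ ^ ((n : ℝ) - 1) := by
  rw [Real.rpow_sub_one inv_goldenRatio_pos.ne', Real.rpow_natCast,
    le_div_iff₀ inv_goldenRatio_pos, mul_comm]
  exact inv_goldenRatio_mul_orbitProd_le n hx

lemma abs_Tmap_iterate_rpow_le {p : ℝ} (hp : 0 ≤ p) (n : ℕ) (f : ℝ → ℝ) {x : ℝ}
    (hx : x ∈ Ico (0 : ℝ) 1) :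
    |Tmap^[n] f x| ^ p ≤ φ⁻¹ ^ (((n : ℝ) - 1) * p) * |f (gaussMap^[n] x)| ^ p := by
  have hP := orbitProd_nonneg n hx
  rw [Tmap_iterate_apply, abs_mul, abs_of_nonneg hP, Real.mul_rpow hP (abs_nonneg _),
    Real.rpow_mul inv_goldenRatio_pos.le]
  gcongr
  exact orbitProd_le n hx

lemma measurable_gaussMap : Measurable gaussMap :=
  measurable_fract.comp measurable_inv

/-- The `k`-th branch `(1/(k+2), 1/(k+1)]` of the Gauss map, on which `⌊1/x⌋ = k + 1`. -/
def gaussBranch (k : ℕ) : Set ℝ := Inv.inv ⁻¹' Ico ((k : ℝ) + 1) (k + 2)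

lemma measurableSet_gaussBranch (k : ℕ) : MeasurableSet (gaussBranch k) :=
  measurable_inv measurableSet_Ico

lemma pairwise_disjoint_gaussBranch : Pairwise (Function.onFun Disjoint gaussBranch) :=
  (pairwise_disjoint_on gaussBranch).2 fun i j hij => disjoint_left.2 fun x hi hj => by
    have : (i : ℝ) + 1 ≤ j := by exact_mod_cast hij
    linarith [hi.2, hj.1]

lemma iUnion_gaussBranch : ⋃ k, gaussBranch k = Ioc (0 : ℝ) 1 := by
  ext x
  simp only [gaussBranch, mem_iUnion, mem_preimage, mem_Ico, mem_Ioc]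
  constructor
  · rintro ⟨k, hk, -⟩
    exact (one_le_inv_iff₀.1 (le_trans (by linarith [Nat.cast_nonneg (α := ℝ) k]) hk))
  · intro hx
    have h1 : 1 ≤ x⁻¹ := one_le_inv_iff₀.2 hx
    refine ⟨⌊x⁻¹ - 1⌋₊, ?_, ?_⟩
    · linarith [Nat.floor_le (sub_nonneg.2 h1)]
    · linarith [Nat.lt_floor_add_one (x⁻¹ - 1)]

lemma gaussBranch_eq_image (k : ℕ) :
    gaussBranch k = (fun y : ℝ => (y + (k + 1))⁻¹) '' Ico 0 1 := by
  have : Ico ((k : ℝ) + 1) (k + 2) = (· + ((k : ℝ) + 1)) '' Ico 0 1 := by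
    rw [image_add_const_Ico]; ring_nf
  rw [gaussBranch, inv_preimage, ← image_inv_eq_inv, this, image_image]

lemma gaussMap_inv_add_natCast {y : ℝ} (hy : y ∈ Ico (0 : ℝ) 1) (n : ℕ) :
    gaussMap (y + n)⁻¹ = y := by
  rw [gaussMap, inv_inv, Int.fract_add_natCast, Int.fract_eq_self.2 hy]

lemma lintegral_gaussBranch (k : ℕ) (G : ℝ → ℝ≥0∞) :
    ∫⁻ x in gaussBranch k, G x =
      ∫⁻ y in Ico 0 1, ENNReal.ofReal (((y + (k + 1)) ^ 2)⁻¹) * G (y + (k + 1))⁻¹ := by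
  have hpos : ∀ y ∈ Ico (0 : ℝ) 1, y + (k + 1) ≠ 0 := fun y hy => by
    have := hy.1; positivity
  have hderiv : ∀ y ∈ Ico (0 : ℝ) 1, HasDerivWithinAt (fun y : ℝ => (y + (k + 1))⁻¹)
      (-1 / (y + (k + 1)) ^ 2) (Ico 0 1) y := fun y hy =>
    (((hasDerivAt_id y).add_const _).inv (hpos y hy)).hasDerivWithinAt
  have hinj : InjOn (fun y : ℝ => (y + (k + 1))⁻¹) (Ico 0 1) := fun a _ b _ h =>
    add_right_cancel (inv_injective h)
  rw [gaussBranch_eq_image,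
    lintegral_image_eq_lintegral_abs_deriv_mul measurableSet_Ico hderiv hinj]
  refine setLIntegral_congr_fun measurableSet_Ico fun y _ => ?_
  rw [neg_div, abs_neg, abs_of_nonneg (by positivity), one_div]

noncomputable def gaussDensity (x : ℝ) : ℝ := (Real.log 2)⁻¹ * (1 + x)⁻¹

lemma gaussμ_eq_withDensity :
    gaussμ = (volume.restrict (Ioo 0 1)).withDensity fun x => ENNReal.ofReal (gaussDensity x) :=
  rfl

lemma measurable_gaussDensity : Measurable gaussDensity := by
  unfold gaussDensity; fun_prop

lemma inv_sq_mul_gaussDensity_inv {c : ℝ} (hc : 0 < c) :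
    (c ^ 2)⁻¹ * gaussDensity c⁻¹ = (Real.log 2)⁻¹ * (c⁻¹ - (c + 1)⁻¹) := by
  unfold gaussDensity
  field_simp
  ring

lemma tsum_gaussBranch_weight {y : ℝ} (hy : 0 ≤ y) :
    ∑' k : ℕ, ENNReal.ofReal ((Real.log 2)⁻¹ * ((y + (k + 1))⁻¹ - (y + (k + 1) + 1)⁻¹)) =
      ENNReal.ofReal (gaussDensity y) := by
  set b : ℕ → ℝ := fun k => (y + (k + 1))⁻¹
  have hb : Antitone b := fun i j hij => by
    simp only [b]; gcongr
  have hlim : Tendsto b atTop (𝓝 0) :=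
    tendsto_inv_atTop_zero.comp <| tendsto_atTop_add_const_left _ _ <|
      tendsto_atTop_add_const_right _ _ tendsto_natCast_atTop_atTop
  have hsum := (hasSum_sub_succ_of_antitone hb hlim).mul_left (Real.log 2)⁻¹
  have hL : 0 ≤ (Real.log 2)⁻¹ := inv_nonneg.2 (Real.log_nonneg one_le_two)
  have hterm : ∀ k : ℕ, (y + (k + 1) + 1)⁻¹ = b (k + 1) := fun k => by
    simp only [b]; push_cast; ring_nf
  simp_rw [hterm]
  rw [← ENNReal.ofReal_tsum_of_nonneg (fun k => mul_nonneg hL (sub_nonneg.2 (hb k.le_succ)))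
    hsum.summable, hsum.tsum_eq, gaussDensity, add_comm 1 y]
  simp [b]

lemma lintegral_comp_gaussMap {H : ℝ → ℝ≥0∞} (hH : Measurable H) :
    ∫⁻ x, H (gaussMap x) ∂gaussμ = ∫⁻ x, H x ∂gaussμ := by
  have hρ := measurable_gaussDensity.ennreal_ofReal
  rw [gaussμ_eq_withDensity, lintegral_withDensity_eq_lintegral_mul _ hρ
    (g := fun x => H (gaussMap x)) (hH.comp measurable_gaussMap),
    lintegral_withDensity_eq_lintegral_mul _ hρ hH]
  set ρ : ℝ → ℝ≥0∞ := fun x => ENNReal.ofReal (gaussDensity x)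
  simp only [Pi.mul_apply]
  calc ∫⁻ x in Ioo 0 1, ρ x * H (gaussMap x)
      = ∑' k, ∫⁻ x in gaussBranch k, ρ x * H (gaussMap x) := by
        rw [setLIntegral_congr Ioo_ae_eq_Ioc, ← iUnion_gaussBranch,
          lintegral_iUnion measurableSet_gaussBranch pairwise_disjoint_gaussBranch]
    _ = ∑' k : ℕ, ∫⁻ y in Ico (0 : ℝ) 1, ENNReal.ofReal
          ((Real.log 2)⁻¹ * ((y + (k + 1))⁻¹ - (y + (k + 1) + 1)⁻¹)) * H y := by
        refine tsum_congr fun k => ?_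
        rw [lintegral_gaussBranch]
        refine setLIntegral_congr_fun measurableSet_Ico fun y hy => ?_
        have hc : 0 < y + (k + 1) := by have := hy.1; positivity
        have hα : gaussMap (y + (k + 1))⁻¹ = y := by
          exact_mod_cast gaussMap_inv_add_natCast hy (k + 1)
        rw [hα, ← mul_assoc, ← ENNReal.ofReal_mul (by positivity),
          inv_sq_mul_gaussDensity_inv hc]
    _ = ∫⁻ y in Ico 0 1, ρ y * H y := by
        rw [← lintegral_tsum fun k => by fun_prop]
        refine setLIntegral_congr_fun measurableSet_Ico fun y hy => ?_
        rw [ENNReal.tsum_mul_right, tsum_gaussBranch_weight hy.1]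
    _ = ∫⁻ y in Ioo 0 1, ρ y * H y := (setLIntegral_congr Ioo_ae_eq_Ico).symm

lemma measurePreserving_gaussMap : MeasurePreserving gaussMap gaussμ gaussμ :=
  ⟨measurable_gaussMap, Measure.ext_of_lintegral _ fun H hH => by
    rw [lintegral_map hH measurable_gaussMap, lintegral_comp_gaussMap hH]⟩

lemma ae_mem_Ioo_gaussμ : ∀ᵐ x ∂gaussμ, x ∈ Ioo (0 : ℝ) 1 :=
  (withDensity_absolutelyContinuous _ _).ae_le (ae_restrict_mem measurableSet_Ioo)

/-- Contraction property of `T` on `L^p` of the Gauss measure: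
`∫ |Tⁿf|^p dm ≤ g^{(n-1)p} ∫ |f|^p dm` with `g = (√5 - 1)/2`. -/
theorem Tmap_iterate_Lp_contraction (p : ℝ) (hp : 1 < p) (n : ℕ) (f : ℝ → ℝ)
    (hf : MemLp f (ENNReal.ofReal p) gaussμ) :
    ∫ x, |Tmap^[n] f x| ^ p ∂gaussμ ≤
      (((Real.sqrt 5 - 1) / 2) ^ (((n : ℝ) - 1) * p)) * ∫ x, |f x| ^ p ∂gaussμ := by
  have hp0 : 0 < p := by linarith
  have hαn := measurePreserving_gaussMap.iterate n
  have hint : Integrable (fun x => |f (gaussMap^[n] x)| ^ p) gaussμ := by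
    simpa [ENNReal.toReal_ofReal hp0.le] using (hf.comp_measurePreserving hαn).integrable_norm_rpow
      (by simpa using hp0) ENNReal.ofReal_ne_top
  rw [← inv_goldenRatio_eq]
  calc ∫ x, |Tmap^[n] f x| ^ p ∂gaussμ
      ≤ ∫ x, φ⁻¹ ^ (((n : ℝ) - 1) * p) * |f (gaussMap^[n] x)| ^ p ∂gaussμ := by
        refine integral_mono_of_nonneg (ae_of_all _ fun x => by positivity) (hint.const_mul _) ?_
        filter_upwards [ae_mem_Ioo_gaussμ] with x hx
        exact abs_Tmap_iterate_rpow_le hp0.le n f (Ioo_subset_Ico_self hx)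
    _ = φ⁻¹ ^ (((n : ℝ) - 1) * p) * ∫ x, |f x| ^ p ∂gaussμ := by
        rw [integral_const_mul, hαn.integral_comp_of_aestronglyMeasurable
          (g := fun y => |f y| ^ p) (hf.1.aemeasurable.abs.pow_const p).aestronglyMeasurable]
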